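/- There exists an edge-coloring of K_6 with Δ^mon = 2 (so Δ^mon ≤ n − 4 with n = 6) such that K_6 contains no two vertex-disjoint properly edge-colored cycles. -/
import Mathlib


/-- Number of edges of color `a` incident with `v` (monochromatic degree). -/
noncomputable def monDeg {V : Type*} (col : V → V → ℕ) (v : V) (a : ℕ) : ℕ :=
  {u | u ≠ v ∧ col v u = a}.ncard

/-- Color degree of a vertex: number of distinct colors on incident edges. -/
noncomputable def colorDeg {V : Type*} (col : V → V → ℕ) (v : V) : ℕ :=
  (col v '' {u | u ≠ v}).ncard

/-- Maximum monochromatic degree Δ^mon. -/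
noncomputable def maxMonDeg {V : Type*} (col : V → V → ℕ) : ℕ :=
  sSup {d | ∃ v a, d = monDeg col v a}

/-- Number of colors appearing on edges. -/
noncomputable def numColors {V : Type*} (col : V → V → ℕ) : ℕ :=
  {a | ∃ u v : V, u ≠ v ∧ col u v = a}.ncard

/-- A properly edge-colored (PC) cycle of length `m`, given by an injective
map `c : ZMod m → V`; adjacent edges get distinct colors. -/
def IsPCCycle {V : Type*} (col : V → V → ℕ) (m : ℕ) (c : ZMod m → V) : Prop :=
  3 ≤ m ∧ Function.Injective c ∧
    ∀ i : ZMod m, col (c i) (c (i + 1)) ≠ col (c (i + 1)) (c (i + 2))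

/-- `k` pairwise vertex-disjoint PC cycles. -/
def HasKDisjointPCCycles {V : Type*} (col : V → V → ℕ) (k : ℕ) : Prop :=
  ∃ (m : Fin k → ℕ) (c : ∀ j, ZMod (m j) → V),
    (∀ j, IsPCCycle col (m j) (c j)) ∧
    ∀ j j', j ≠ j' → Disjoint (Set.range (c j)) (Set.range (c j'))

/-- `k` pairwise vertex-disjoint PC cycles, each of length at most 4. -/
def HasKDisjointShortPCCycles {V : Type*} (col : V → V → ℕ) (k : ℕ) : Prop :=
  ∃ (m : Fin k → ℕ) (c : ∀ j, ZMod (m j) → V),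
    (∀ j, IsPCCycle col (m j) (c j) ∧ m j ≤ 4) ∧
    ∀ j j', j ≠ j' → Disjoint (Set.range (c j)) (Set.range (c j'))

/-- A directed cycle of length `m` in a digraph with arc relation `A`. -/
def IsDicycle {V : Type*} (A : V → V → Prop) (m : ℕ) (c : ZMod m → V) : Prop :=
  2 ≤ m ∧ Function.Injective c ∧ ∀ i : ZMod m, A (c i) (c (i + 1))

/-- `k` pairwise vertex-disjoint directed cycles. -/
def HasKDisjointDicycles {V : Type*} (A : V → V → Prop) (k : ℕ) : Prop :=
  ∃ (m : Fin k → ℕ) (c : ∀ j, ZMod (m j) → V),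
    (∀ j, IsDicycle A (m j) (c j)) ∧
    ∀ j j', j ≠ j' → Disjoint (Set.range (c j)) (Set.range (c j'))

/-- A monochromatic edge-cut: a bipartition with all crossing edges one color. -/
def HasMonochromaticCut {V : Type*} (col : V → V → ℕ) : Prop :=
  ∃ S : Set V, S.Nonempty ∧ Sᶜ.Nonempty ∧ ∃ a, ∀ x ∈ S, ∀ y ∈ Sᶜ, col x y = a

/-- A rainbow triangle: three vertices with pairwise distinct edge colors. -/
def HasRainbowTriangle {V : Type*} (col : V → V → ℕ) : Prop :=
  ∃ x y z : V, x ≠ y ∧ y ≠ z ∧ x ≠ z ∧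
    col x y ≠ col y z ∧ col y z ≠ col x z ∧ col x y ≠ col x z

/-- A Gallai partition of an edge-colored complete graph. -/
def HasGallaiPartition {V : Type*} (col : V → V → ℕ) : Prop :=
  ∃ (q : ℕ) (U : Fin q → Set V), 2 ≤ q ∧ (∀ i, (U i).Nonempty) ∧
    (∀ i j, i ≠ j → Disjoint (U i) (U j)) ∧ (⋃ i, U i) = Set.univ ∧
    (∀ i j, i ≠ j → ∃ a, ∀ x ∈ U i, ∀ y ∈ U j, col x y = a) ∧
    ∃ a b, ∀ i j, i ≠ j → ∀ x ∈ U i, ∀ y ∈ U j, col x y = a ∨ col x y = b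

/-- The tight coloring of K_6: vertex 0 joined to i by unique color i+1,
and K_5 on {1,...,5} decomposed into two Hamilton cycles colored 0 and 1. -/
def myCol : Fin 6 → Fin 6 → ℕ :=
  ![![0,2,3,4,5,6],
    ![2,0,0,1,1,0],
    ![3,0,0,0,1,1],
    ![4,1,0,0,0,1],
    ![5,1,1,0,0,0],
    ![6,0,1,1,0,0]]

lemma myCol_symm : ∀ u v, myCol u v = myCol v u := by decide

lemma myCol_no_three : ∀ v u1 u2 u3 : Fin 6, u1 ≠ v → u2 ≠ v → u3 ≠ v →
    u1 ≠ u2 → u1 ≠ u3 → u2 ≠ u3 →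
    ¬(myCol v u1 = myCol v u2 ∧ myCol v u1 = myCol v u3) := by decide

lemma myCol_no_rainbow : ∀ x y z : Fin 6, x ≠ 0 → y ≠ 0 → z ≠ 0 →
    x ≠ y → y ≠ z → x ≠ z →
    ¬(myCol x y ≠ myCol y z ∧ myCol y z ≠ myCol z x ∧ myCol z x ≠ myCol x y) := by
  decide

lemma monDeg_set_eq (v : Fin 6) (a : ℕ) :
    {u : Fin 6 | u ≠ v ∧ myCol v u = a}
      = ↑(Finset.univ.filter (fun u => u ≠ v ∧ myCol v u = a)) := by
  ext u; simp

lemma monDeg_le_two (v : Fin 6) (a : ℕ) : monDeg myCol v a ≤ 2 := by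
  rw [monDeg, monDeg_set_eq, Set.ncard_coe_finset]
  by_contra h
  push_neg at h
  rw [show 2 < _ ↔ _ from Finset.two_lt_card_iff] at h
  obtain ⟨u1, u2, u3, h1, h2, h3, h12, h13, h23⟩ := h
  simp only [Finset.mem_filter] at h1 h2 h3
  exact myCol_no_three v u1 u2 u3 h1.2.1 h2.2.1 h3.2.1 h12 h13 h23
    ⟨h1.2.2.trans h2.2.2.symm, h1.2.2.trans h3.2.2.symm⟩

lemma monDeg_eq_two : monDeg myCol 1 0 = 2 := by
  rw [monDeg]
  have : {u : Fin 6 | u ≠ 1 ∧ myCol 1 u = 0} = ↑({2, 5} : Finset (Fin 6)) := by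
    ext u; revert u; decide
  rw [this, Set.ncard_coe_finset]
  decide

lemma myCol_no_pc_triangle : ∀ n, n = 3 → ∀ c : ZMod n → Fin 6,
    Function.Injective c →
    (∀ i : ZMod n, myCol (c i) (c (i + 1)) ≠ myCol (c (i + 1)) (c (i + 2))) →
    (∀ i, c i ≠ 0) → False := by
  intro n hn c hinj hpc h0
  subst hn
  have h01 : c 0 ≠ c 1 := fun h => absurd (hinj h) (by decide)
  have h12 : c 1 ≠ c 2 := fun h => absurd (hinj h) (by decide)
  have h02 : c 0 ≠ c 2 := fun h => absurd (hinj h) (by decide)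
  have e0 := hpc 0
  have e1 := hpc 1
  have e2 := hpc 2
  norm_num at e0 e1 e2
  have h3 : (3 : ZMod 3) = 0 := by decide
  have h4 : (4 : ZMod 3) = 1 := by decide
  rw [h3] at e1 e2
  rw [h4] at e2
  exact myCol_no_rainbow (c 0) (c 1) (c 2) (h0 0) (h0 1) (h0 2) h01 h12 h02
    ⟨e0, e1, e2⟩

/-- There is an edge-coloring of K_6 with Δ^mon = 2 and no two disjoint PC
cycles (tightness of the bound n − 5 for k = 2). -/
theorem stmt19 :
    ∃ col : Fin 6 → Fin 6 → ℕ,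
      (∀ u v, col u v = col v u) ∧
      maxMonDeg col = 2 ∧
      ¬ HasKDisjointPCCycles col 2 := by
  refine ⟨myCol, myCol_symm, ?_, ?_⟩
  · -- maxMonDeg = 2
    have hub : ∀ d ∈ {d | ∃ v a, d = monDeg myCol v a}, d ≤ 2 := by
      rintro d ⟨v, a, rfl⟩
      exact monDeg_le_two v a
    have hmem : (2 : ℕ) ∈ {d | ∃ v a, d = monDeg myCol v a} :=
      ⟨1, 0, monDeg_eq_two.symm⟩
    exact le_antisymm (csSup_le ⟨2, hmem⟩ hub) (le_csSup ⟨2, hub⟩ hmem)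
  · rintro ⟨m, c, hpc, hdisj⟩
    -- each cycle has length exactly 3
    have hm3 : ∀ j, 3 ≤ m j := fun j => (hpc j).1
    have hcard : ∀ j : Fin 2, (Set.range (c j)).ncard = m j := by
      intro j
      haveI : NeZero (m j) := ⟨by have := hm3 j; omega⟩
      rw [← Nat.card_coe_set_eq, Nat.card_range_of_injective (hpc j).2.1,
        Nat.card_zmod]
    have hsum : m 0 + m 1 ≤ 6 := by
      have hd : Disjoint (Set.range (c 0)) (Set.range (c 1)) :=
        hdisj 0 1 (by decide)
      have hfin : ∀ j : Fin 2, (Set.range (c j)).Finite := by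
        intro j
        haveI : NeZero (m j) := ⟨by have := hm3 j; omega⟩
        exact Set.finite_range _
      have := Set.ncard_union_eq hd (hfin 0) (hfin 1)
      have hle : (Set.range (c 0) ∪ Set.range (c 1)).ncard
          ≤ (Set.univ : Set (Fin 6)).ncard :=
        Set.ncard_le_ncard (Set.subset_univ _) Set.finite_univ
      rw [this, hcard 0, hcard 1] at hle
      simpa [Set.ncard_univ] using hle
    have hm0 : m 0 = 3 := by have := hm3 0; have := hm3 1; omega
    have hm1 : m 1 = 3 := by have := hm3 0; have := hm3 1; omega
    -- one of the two cycles avoids vertex 0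
    by_cases h0 : (0 : Fin 6) ∈ Set.range (c 0)
    · have h0' : ∀ i, c 1 i ≠ 0 := by
        intro i hi
        exact (hdisj 0 1 (by decide)).ne_of_mem h0 ⟨i, hi⟩ rfl
      exact myCol_no_pc_triangle (m 1) hm1 (c 1) (hpc 1).2.1 (hpc 1).2.2 h0'
    · have h0' : ∀ i, c 0 i ≠ 0 := fun i hi => h0 ⟨i, hi⟩
      exact myCol_no_pc_triangle (m 0) hm0 (c 0) (hpc 0).2.1 (hpc 0).2.2 h0'
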